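/- Let E be a row-finite directed graph without sinks. If E fails Condition (K), i.e., there is a vertex v with exactly one cycle μ based at v (and no other return path), then the cylinder set Z(v) is not paradoxical: there do not exist finite families of pairs of finite paths (α_i, β_i)_{i=1}^n and (γ_j, δ_j)_{j=1}^m with t(α_i) = t(β_i), t(γ_j) = t(δ_j), s(α_i) = s(γ_j) = v, such that ⋃_i Z(β_i) = ⋃_j Z(δ_j) = Z(v) and the sets Z(α_1), ..., Z(α_n), Z(γ_1), ..., Z(γ_m) are pairwise disjoint subsets of Z(v). -/

import Mathlib

variable {V E : Type}

/-- A finite path in a directed graph with source map `s` and target map `t`.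
Paths of length 0 are identified with their source vertex. -/
structure FPath (s t : E → V) : Type where
  src : V
  edges : List E
  chain : edges.Chain' (fun e f => t e = s f)
  head_src : ∀ e ∈ edges.head?, s e = src

namespace FPath

variable {s t : E → V}

/-- The terminal vertex of a finite path. -/
def trg (p : FPath s t) : V := (p.edges.getLast?).elim p.src t

/-- The length-zero path at a vertex. -/
def ofVertex (s t : E → V) (v : V) : FPath s t :=
  ⟨v, [], List.isChain_nil, by simp⟩

end FPath

/-- `x : ℕ → E` is an infinite path when consecutive edges match up. -/
def IsInfPath (s t : E → V) (x : ℕ → E) : Prop := ∀ i, t (x i) = s (x (i + 1))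

/-- The infinite path space `E^∞`. -/
abbrev InfPath (s t : E → V) : Type := {x : ℕ → E // IsInfPath s t x}

/-- The cylinder set `Z(p)` of a finite path `p`. -/
def Cyl (s t : E → V) (p : FPath s t) : Set (InfPath s t) :=
  {x | s (x.1 0) = p.src ∧ ∀ (i : ℕ) (h : i < p.edges.length), x.1 i = p.edges[i]'h}

/-- The cylinder set `Z(v)` of a vertex: all infinite paths starting at `v`. -/
def CylV (s t : E → V) (v : V) : Set (InfPath s t) := {x | s (x.1 0) = v}

/-- A graph is row-finite when each vertex emits finitely many edges. -/
def RowFinite (s : E → V) : Prop := ∀ v : V, {e : E | s e = v}.Finite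

/-- A graph has no sinks when each vertex emits at least one edge. -/
def NoSinks (s : E → V) : Prop := ∀ v : V, ∃ e : E, s e = v

/-- `Reach s t v w` : there is a finite path (possibly empty) from `v` to `w`. -/
def Reach (s t : E → V) (v w : V) : Prop := ∃ p : FPath s t, p.src = v ∧ p.trg = w

/-- A cycle (loop): a nonempty finite path returning to its source. -/
def IsCycle {s t : E → V} (p : FPath s t) : Prop := p.edges ≠ [] ∧ p.trg = p.src

/-- A cycle that visits its base only at the start and the end. -/
def IsStrictCycle {s t : E → V} (p : FPath s t) : Prop :=
  IsCycle p ∧ ∀ (i : ℕ) (h : i < p.edges.length), 0 < i → s (p.edges[i]'h) ≠ p.src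

/-- The vertices visited by a finite path. -/
def OnPath {s t : E → V} (p : FPath s t) (u : V) : Prop :=
  u = p.src ∨ ∃ e ∈ p.edges, t e = u

/-- `V^2` : vertices which are the base of at least two distinct cycles. -/
def V2set (s t : E → V) : Set V :=
  {v | ∃ p q : FPath s t, p.src = v ∧ q.src = v ∧ IsStrictCycle p ∧ IsStrictCycle q ∧
    p.edges ≠ q.edges}

/-- `V^1` : vertices which are the base of exactly one cycle. -/
def V1set (s t : E → V) : Set V :=
  {v | ∃! l : List E, ∃ p : FPath s t, p.src = v ∧ IsStrictCycle p ∧ p.edges = l}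

/-- Condition (K): no vertex is the base of exactly one cycle. -/
def CondK (s t : E → V) : Prop := V1set s t = ∅

/-- Vertices which lie on a loop (cycle). -/
def OnLoop (s t : E → V) : Set V :=
  {u | ∃ p : FPath s t, IsCycle p ∧ OnPath p u}

/-- The path `p` passes through a vertex of the set `S`. -/
def Passes {s t : E → V} (p : FPath s t) (S : Set V) : Prop := ∃ u ∈ S, OnPath p u

/-- `B` is a finite decomposition of `Z(v)` into disjoint cylinder sets of paths from `v`. -/
def Decomp (s t : E → V) (v : V) (B : List (FPath s t)) : Prop :=
  (∀ β ∈ B, β.src = v) ∧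
  (⋃ β ∈ B, Cyl s t β) = CylV s t v ∧
  (B.map (Cyl s t)).Pairwise Disjoint

/-- Condition (I). -/
def CondI (s t : E → V) : Prop :=
  ∀ v : V, ∃ α : FPath s t, α.src = v ∧ α.trg ∈ V2set s t

/-- Condition (DI). -/
def CondDI (s t : E → V) : Prop :=
  ∀ v : V, ∃ B : List (FPath s t), Decomp s t v B ∧
    ∀ β ∈ B, ∃ α : FPath s t, α.src = v ∧ α.trg = β.trg ∧ Passes α (V2set s t)

/-- Condition (DL). -/
def CondDL (s t : E → V) : Prop :=
  ∀ v : V, ∃ B : List (FPath s t), Decomp s t v B ∧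
    ∀ β ∈ B, ∃ α : FPath s t, α.src = v ∧ α.trg = β.trg ∧ Passes α (OnLoop s t)

/-- `Z(μ)` is `(G^a,2,1)`-paradoxical: two families of pairs of finite paths
`(α_i, β_i)` and `(γ_j, δ_j)` with `t(α)=t(β)`, the cylinders of the second
coordinates each covering `Z(μ)`, and the cylinders of the first coordinates
pairwise disjoint subsets of `Z(μ)`. -/
def Paradoxical (s t : E → V) (μ : FPath s t) : Prop :=
  ∃ A C : List (FPath s t × FPath s t),
    (∀ q ∈ A ++ C, q.1.trg = q.2.trg ∧ Cyl s t q.1 ⊆ Cyl s t μ) ∧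
    (⋃ q ∈ A, Cyl s t q.2) = Cyl s t μ ∧
    (⋃ q ∈ C, Cyl s t q.2) = Cyl s t μ ∧
    ((A ++ C).map (fun q => Cyl s t q.1)).Pairwise Disjoint

/-- Paradoxicality of the cylinder set `Z(v)` of a vertex. -/
def ParadoxicalV (s t : E → V) (v : V) : Prop := Paradoxical s t (FPath.ofVertex s t v)

/-- A maximal tail. -/
def MaximalTail (s t : E → V) (M : Set V) : Prop :=
  M.Nonempty ∧
  (∀ v w : V, Reach s t v w → w ∈ M → v ∈ M) ∧
  (∀ v ∈ M, (∃ e : E, s e = v) → ∃ e : E, s e = v ∧ t e ∈ M) ∧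
  (∀ v ∈ M, ∀ w ∈ M, ∃ y ∈ M, Reach s t v y ∧ Reach s t w y)

/-- The shift map on the infinite path space. -/
def shiftMap (s t : E → V) (x : InfPath s t) : InfPath s t :=
  ⟨fun i => x.1 (i + 1), fun i => x.2 (i + 1)⟩

/-- The cylinder set of a single edge. -/
def edgeCyl (s t : E → V) (e : E) : Set (InfPath s t) := {x | x.1 0 = e}

/-- Eventual periodicity of an infinite sequence of edges. -/
def EvPeriodic (x : ℕ → E) : Prop := ∃ N p : ℕ, 1 ≤ p ∧ ∀ i, N ≤ i → x (i + p) = x i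

/-- A cycle has an exit. -/
def HasExit {s t : E → V} (c : FPath s t) : Prop :=
  ∃ (i : ℕ) (h : i < c.edges.length) (e : E),
    e ≠ c.edges[i]'h ∧ s e = s (c.edges[i]'h)

/-- The length-one path consisting of a single edge. -/
def path1 (s t : E → V) (w : V) (a : E) (h : s a = w) : FPath s t :=
  ⟨w, [a], List.isChain_singleton a, by simp [h]⟩

/-- The length-two path consisting of two composable edges. -/
def path2 (s t : E → V) (w : V) (a b : E) (ha : s a = w) (hab : t a = s b) : FPath s t :=
  ⟨w, [a, b], List.isChain_cons_cons.mpr ⟨hab, List.isChain_singleton b⟩, by simp [ha]⟩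


section Helpers11

variable {s t : E → V}

lemma FPath.trg_of_nil (p : FPath s t) (h : p.edges = []) : p.trg = p.src := by
  simp [FPath.trg, h]

lemma FPath.trg_of_ne (p : FPath s t) (h : p.edges ≠ []) :
    p.trg = t (p.edges.getLast h) := by
  simp [FPath.trg, List.getLast?_eq_getLast h]

lemma FPath.src_getElem_zero (p : FPath s t) (h : 0 < p.edges.length) :
    s (p.edges[0]'h) = p.src := by
  have hne : p.edges ≠ [] := List.ne_nil_of_length_pos h
  rw [List.getElem_zero]
  exact p.head_src _ (by rw [List.head?_eq_head hne]; rfl)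

lemma FPath.chain_getElem (p : FPath s t) (i : ℕ) (h : i + 1 < p.edges.length) :
    t (p.edges[i]'(by omega)) = s (p.edges[i+1]'h) := by
  have := List.isChain_iff_getElem.mp p.chain i (by omega)
  simpa using this

/-- Concatenation of a finite path with an infinite sequence of edges. -/
def concatFun (α : FPath s t) (z : ℕ → E) : ℕ → E :=
  fun n => if h : n < α.edges.length then α.edges[n] else z (n - α.edges.length)

lemma concatFun_lt (α : FPath s t) (z : ℕ → E) (n : ℕ) (h : n < α.edges.length) :
    concatFun α z n = α.edges[n] := dif_pos h

lemma concatFun_ge (α : FPath s t) (z : ℕ → E) (n : ℕ) (h : α.edges.length ≤ n) :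
    concatFun α z n = z (n - α.edges.length) := dif_neg (by omega)

lemma concat_isInfPath (α : FPath s t) (z : ℕ → E) (hz : IsInfPath s t z)
    (hsz : s (z 0) = α.trg) : IsInfPath s t (concatFun α z) := by
  intro n
  rcases lt_or_ge (n + 1) α.edges.length with h | h
  · rw [concatFun_lt _ _ _ (by omega), concatFun_lt _ _ _ h]
    exact α.chain_getElem n h
  · rw [concatFun_ge _ _ _ h]
    rcases lt_or_ge n α.edges.length with h2 | h2
    · rw [concatFun_lt _ _ _ h2]
      have hne : α.edges ≠ [] := List.ne_nil_of_length_pos (by omega)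
      have h3 : n + 1 - α.edges.length = 0 := by omega
      rw [h3, hsz, α.trg_of_ne hne, List.getLast_eq_getElem]
      have hn : n = α.edges.length - 1 := by omega
      exact congrArg t (by simp only [hn])
    · rw [concatFun_ge _ _ _ h2]
      have h4 : n + 1 - α.edges.length = (n - α.edges.length) + 1 := by omega
      rw [h4]
      exact hz _

end Helpers11

/-- if a vertex `v` of a row-finite graph without sinks has a cycle
`μ` based at it and no other return path (failure of Condition (K) at `v`), then
the cylinder set `Z(v)` is not paradoxical. -/
theorem stmt11 (s t : E → V) (hrf : RowFinite s) (hns : NoSinks s)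
    (v : V) (μ : FPath s t) (hsrc : μ.src = v) (hcyc : IsStrictCycle μ)
    (huniq : ∀ q : FPath s t, q.src = v → IsStrictCycle q → q.edges = μ.edges) :
    ¬ ParadoxicalV s t v := by
  classical
  rintro ⟨A, C, hsub, hcovA, hcovC, hdisj⟩
  have hne : μ.edges ≠ [] := hcyc.1.1
  have hP : 0 < μ.edges.length := List.length_pos_iff.mpr hne
  set P := μ.edges.length with hPdef
  let x : ℕ → E := fun n => μ.edges[n % P]'(Nat.mod_lt _ hP)
  have hxdef : ∀ n, x n = μ.edges[n % P]'(Nat.mod_lt _ hP) := fun n => rfl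
  have hxcongr : ∀ a b : ℕ, a % P = b % P → x a = x b := by
    intro a b h
    rw [hxdef, hxdef]
    simp only [h]
  have hx0 : s (μ.edges[0]'hP) = v := by rw [← hsrc]; exact μ.src_getElem_zero hP
  have hlastv : t (μ.edges[P - 1]'(by omega)) = v := by
    have h1 := μ.trg_of_ne hne
    rw [List.getLast_eq_getElem] at h1
    rw [← h1, hcyc.1.2, hsrc]
  have hxpath : IsInfPath s t x := by
    intro n
    rw [hxdef, hxdef]
    rcases Nat.lt_or_ge (n % P + 1) P with h | h
    · have h1 : (n + 1) % P = n % P + 1 := by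
        rw [← Nat.mod_add_mod, Nat.mod_eq_of_lt h]
      simp only [h1]
      exact μ.chain_getElem (n % P) (by omega)
    · have hlt := Nat.mod_lt n hP
      have h1 : (n + 1) % P = 0 := by
        rw [← Nat.mod_add_mod, show n % P + 1 = P by omega, Nat.mod_self]
      have h2 : n % P = P - 1 := by omega
      simp only [h1, h2]
      rw [hlastv, hx0]
  have hxv : ∀ n, n % P = 0 → s (x n) = v := by
    intro n h
    rw [hxdef]
    simp only [h]
    exact hx0
  -- every initial segment of a path from `v` returning to `v` follows `x`
  have ret : ∀ n (y : InfPath s t), s (y.1 0) = v → s (y.1 n) = v →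
      ∀ i, i < n → y.1 i = x i := by
    intro n
    induction n using Nat.strong_induction_on with
    | _ n IH =>
      intro y hy0 hyn i hi
      have hn0 : 0 < n := by omega
      have hex : ∃ j, 0 < j ∧ s (y.1 j) = v := ⟨n, hn0, hyn⟩
      set j := Nat.find hex with hjdef
      obtain ⟨hj0, hjv⟩ := Nat.find_spec hex
      have hjmin : ∀ k, 0 < k → k < j → s (y.1 k) ≠ v := by
        intro k hk hkj hkv
        exact Nat.find_min hex hkj ⟨hk, hkv⟩
      have hjn : j ≤ n := Nat.find_min' hex ⟨hn0, hyn⟩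
      set L : List E := List.ofFn (fun i : Fin j => y.1 i.1) with hLdef
      have hLlen : L.length = j := by simp [hLdef]
      have hLne : L ≠ [] := List.ne_nil_of_length_pos (by omega)
      have hget : ∀ (i : ℕ) (h : i < j), L[i]'(by omega) = y.1 i := by
        intro i h
        simp [hLdef]
      have hchain : L.Chain' (fun e f => t e = s f) := by
        refine List.isChain_iff_getElem.mpr ?_
        intro i hlt
        rw [hLlen] at hlt
        show t (L.get ⟨i, by omega⟩) = s (L.get ⟨i + 1, by omega⟩)
        have e1 : L.get ⟨i, by omega⟩ = y.1 i := hget i (by omega)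
        have e2 : L.get ⟨i + 1, by omega⟩ = y.1 (i + 1) := hget (i + 1) (by omega)
        rw [e1, e2]
        exact y.2 i
      have hhead : ∀ e ∈ L.head?, s e = v := by
        intro e he
        rw [List.head?_eq_head hLne] at he
        have : e = L.head hLne := by simpa [eq_comm] using he
        rw [this, ← List.getElem_zero (by omega), hget 0 hj0]
        exact hy0
      set q : FPath s t := ⟨v, L, hchain, hhead⟩ with hqdef
      have hqcyc : IsStrictCycle q := by
        refine ⟨⟨hLne, ?_⟩, ?_⟩
        · rw [q.trg_of_ne hLne, List.getLast_eq_getElem]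
          show t (L[L.length - 1]'_) = v
          have e1 : L[L.length - 1]'(by omega) = y.1 (j - 1) := by
            have h3 : L.length - 1 = j - 1 := by omega
            simp only [h3]
            exact hget (j - 1) (by omega)
          rw [e1]
          have := y.2 (j - 1)
          rw [show j - 1 + 1 = j by omega] at this
          rw [this]
          exact hjv
        · intro i hlt hi0
          rw [hLlen] at hlt
          rw [hget i hlt]
          exact hjmin i hi0 hlt
      have hqe : L = μ.edges := huniq q rfl hqcyc
      have hjP : j = P := by rw [← hLlen, hqe]
      have hfirst : ∀ i, i < j → y.1 i = x i := by
        intro i h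
        rw [← hget i h, hxdef]
        have : i % P = i := Nat.mod_eq_of_lt (by omega)
        simp only [this]
        exact List.getElem_of_eq hqe _
      by_cases hij : i < j
      · exact hfirst i hij
      · push_neg at hij
        set y' : InfPath s t :=
          ⟨fun m => y.1 (m + j), fun m => by
            have h := y.2 (m + j)
            rwa [show m + j + 1 = m + 1 + j by omega] at h⟩ with hy'def
        have hy'0 : s (y'.1 0) = v := by
          show s (y.1 (0 + j)) = v
          rwa [Nat.zero_add]
        have hy'n : s (y'.1 (n - j)) = v := by
          show s (y.1 (n - j + j)) = v
          rwa [Nat.sub_add_cancel hjn]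
        have h1 := IH (n - j) (by omega) y' hy'0 hy'n (i - j) (by omega)
        have h2 : y.1 i = x (i - j) := by
          have : y'.1 (i - j) = y.1 i := by
            show y.1 (i - j + j) = y.1 i
            rw [Nat.sub_add_cancel hij]
          rwa [this] at h1
        rw [h2]
        apply hxcongr
        conv_rhs => rw [show i = (i - j) + P by omega, Nat.add_mod_right]
  -- an infinite path from `v` with a tail of `x` equals `x`
  have key : ∀ (y : InfPath s t), s (y.1 0) = v →
      ∀ K Lo : ℕ, (∀ m, y.1 (K + m) = x (Lo + m)) → ∀ i, y.1 i = x i := by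
    intro y hy0 K Lo htail i
    have hM : Lo + i + 1 ≤ P * (Lo + i + 1) := Nat.le_mul_of_pos_left _ hP
    set n := K + (P * (Lo + i + 1) - Lo) with hndef
    have hni : i < n := by omega
    have hnv : s (y.1 n) = v := by
      rw [hndef, htail]
      apply hxv
      rw [Nat.add_sub_cancel' (by omega : Lo ≤ P * (Lo + i + 1))]
      simp [Nat.mul_mod_right]
    exact ret n y hy0 hnv i hni
  -- main step: if `x ∈ Z(β)` then `x ∈ Z(α)` for a pair `(α, β)`
  have getx : ∀ q : FPath s t × FPath s t, q ∈ A ++ C →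
      (⟨x, hxpath⟩ : InfPath s t) ∈ Cyl s t q.2 →
      (⟨x, hxpath⟩ : InfPath s t) ∈ Cyl s t q.1 := by
    intro q hq hx2
    obtain ⟨htrg, hsubα⟩ := hsub q hq
    obtain ⟨hx2s, hx2e⟩ := hx2
    set Lo := q.2.edges.length with hLo
    have hzsrc : s (x Lo) = q.1.trg := by
      rw [htrg]
      rcases eq_or_ne q.2.edges [] with he | he
      · rw [q.2.trg_of_nil he]
        have h0 : Lo = 0 := by simp [hLo, he]
        rw [h0]
        exact hx2s
      · rw [q.2.trg_of_ne he, List.getLast_eq_getElem]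
        have hL0 : 0 < Lo := List.length_pos_iff.mpr he
        have h1 : q.2.edges[Lo - 1]'(by omega) = x (Lo - 1) := (hx2e (Lo - 1) (by omega)).symm
        rw [h1]
        have h2 := hxpath (Lo - 1)
        rw [show Lo - 1 + 1 = Lo by omega] at h2
        exact h2.symm
    set z : ℕ → E := fun m => x (Lo + m) with hzdef
    have hzpath : IsInfPath s t z := by
      intro m
      have h := hxpath (Lo + m)
      rwa [show Lo + m + 1 = Lo + (m + 1) by omega] at h
    have hy : IsInfPath s t (concatFun q.1 z) := concat_isInfPath q.1 z hzpath hzsrc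
    set y : InfPath s t := ⟨concatFun q.1 z, hy⟩ with hydef
    have hyα : y ∈ Cyl s t q.1 := by
      refine ⟨?_, ?_⟩
      · show s (concatFun q.1 z 0) = q.1.src
        rcases Nat.eq_zero_or_pos q.1.edges.length with h0 | h0
        · rw [concatFun_ge _ _ _ (by omega)]
          rw [q.1.trg_of_nil (List.length_eq_zero_iff.mp h0)] at hzsrc
          rw [show 0 - q.1.edges.length = 0 by omega]
          exact hzsrc
        · rw [concatFun_lt _ _ _ h0]
          exact q.1.src_getElem_zero h0
      · intro i hilt
        show concatFun q.1 z i = q.1.edges[i]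
        exact concatFun_lt _ _ _ hilt
    have hy0 : s (y.1 0) = v := (hsubα hyα).1
    have hyx : ∀ i, y.1 i = x i := by
      refine key y hy0 q.1.edges.length Lo ?_
      intro m
      show concatFun q.1 z (q.1.edges.length + m) = x (Lo + m)
      rw [concatFun_ge _ _ _ (by omega), Nat.add_sub_cancel_left]
    refine ⟨?_, ?_⟩
    · show s (x 0) = q.1.src
      rw [← hyx 0]
      exact hyα.1
    · intro i hilt
      show x i = _
      rw [← hyx i]
      exact hyα.2 i hilt
  have hxmem : (⟨x, hxpath⟩ : InfPath s t) ∈ Cyl s t (FPath.ofVertex s t v) := by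
    refine ⟨hxv 0 (by simp), ?_⟩
    intro i hi
    simp [FPath.ofVertex] at hi
  obtain ⟨qa, hqa, hxa2⟩ : ∃ q ∈ A, (⟨x, hxpath⟩ : InfPath s t) ∈ Cyl s t q.2 := by
    have h := hxmem
    rw [← hcovA] at h
    simpa using h
  obtain ⟨qc, hqc, hxc2⟩ : ∃ q ∈ C, (⟨x, hxpath⟩ : InfPath s t) ∈ Cyl s t q.2 := by
    have h := hxmem
    rw [← hcovC] at h
    simpa using h
  have hxa1 := getx qa (List.mem_append_left _ hqa) hxa2
  have hxc1 := getx qc (List.mem_append_right _ hqc) hxc2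
  rw [List.map_append] at hdisj
  obtain ⟨-, -, hAC⟩ := List.pairwise_append.mp hdisj
  have hd := hAC _ (List.mem_map_of_mem hqa) _ (List.mem_map_of_mem hqc)
  exact (Set.disjoint_left.mp hd hxa1) hxc1
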